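/- Let ε ∈ ℝ, c1,…,c8 real constants, and let u : ℝ² → ℝ be a C^∞ solution of u_tt − (u·u_x)_x + ε·u·u_t = 0 on ℝ². Set w(x,t) = c1·t·x + c2·x + c3·t + c4 + ε·(c5·x·t + c6·t − (1/6)·c1·x³ − (1/2)·c3·x² + c7·x + c8), and define T^t = w_t·(u + (1/2)·x·u_x + t·u_t) + (1/2)·x·w_x·u_t + t·w_x·u·u_x − (3/2)·w·u_t − ε·w·u·(u + (1/2)·x·u_x) and T^x = −u·w_x·(u + (1/2)·x·u_x + t·u_t) − (1/2)·x·w_t·u_t − t·w_t·u·u_x + (3/2)·w·u·u_x + (1/2)·ε·x·w·u·u_t. Then for all (x,t): D_t(T^t) + D_x(T^x) = −(1/2)·ε²·u·(c5·x + c6)·(2u + x·u_x + 2t·u_t); in particular (T^t, T^x) is a first-order approximate conserved vector. -/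

import Mathlib

open Function

noncomputable def pdx (f : ℝ → ℝ → ℝ) : ℝ → ℝ → ℝ := fun x t => deriv (fun y => f y t) x
noncomputable def pdt (f : ℝ → ℝ → ℝ) : ℝ → ℝ → ℝ := fun x t => deriv (fun s => f x s) t

lemma cubic_hasDerivAt (a b c d x : ℝ) :
    HasDerivAt (fun y : ℝ => a*y^3 + b*y^2 + c*y + d) (3*a*x^2 + 2*b*x + c) x := by
  have h := ((((hasDerivAt_pow 3 x).const_mul a).add
      ((hasDerivAt_pow 2 x).const_mul b)).add
      ((hasDerivAt_id x).const_mul c)).add_const d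
  refine (h.congr_deriv ?_).congr_of_eventuallyEq (Filter.Eventually.of_forall fun y => ?_)
  · push_cast
    norm_num
    ring
  · simp

lemma hasDerivAt_slice_t {f : ℝ → ℝ → ℝ} (hf : ContDiff ℝ (⊤ : ℕ∞) (uncurry f)) (x t : ℝ) :
    HasDerivAt (fun s => f x s) (pdt f x t) t := by
  have h1 : DifferentiableAt ℝ (uncurry f) (x, t) := (hf.differentiable (by simp)) (x, t)
  have h2 : DifferentiableAt ℝ (fun s : ℝ => (x, s)) t :=
    (differentiableAt_const x).prodMk differentiableAt_id
  have h : DifferentiableAt ℝ (fun s => f x s) t := h1.comp t h2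
  exact h.hasDerivAt

lemma hasDerivAt_slice_x {f : ℝ → ℝ → ℝ} (hf : ContDiff ℝ (⊤ : ℕ∞) (uncurry f)) (x t : ℝ) :
    HasDerivAt (fun y => f y t) (pdx f x t) x := by
  have h1 : DifferentiableAt ℝ (uncurry f) (x, t) := (hf.differentiable (by simp)) (x, t)
  have h2 : DifferentiableAt ℝ (fun y : ℝ => (y, t)) x :=
    differentiableAt_id.prodMk (differentiableAt_const t)
  have h : DifferentiableAt ℝ (fun y => f y t) x :=
    (h1.comp x h2 : DifferentiableAt ℝ (uncurry f ∘ fun y : ℝ => (y, t)) x)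
  exact h.hasDerivAt

lemma pdx_eq {f : ℝ → ℝ → ℝ} (hf : ContDiff ℝ (⊤ : ℕ∞) (uncurry f)) (p : ℝ × ℝ) :
    pdx f p.1 p.2 = fderiv ℝ (uncurry f) p ((1 : ℝ), (0 : ℝ)) := by
  have hF : HasFDerivAt (uncurry f) (fderiv ℝ (uncurry f) p) p :=
    ((hf.differentiable (by simp)) p).hasFDerivAt
  have hL : HasDerivAt (fun y : ℝ => (y, p.2)) ((1:ℝ), (0:ℝ)) p.1 :=
    (hasDerivAt_id p.1).prodMk (hasDerivAt_const p.1 p.2)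
  have h := hF.comp_hasDerivAt p.1 hL
  exact h.deriv

lemma pdt_eq {f : ℝ → ℝ → ℝ} (hf : ContDiff ℝ (⊤ : ℕ∞) (uncurry f)) (p : ℝ × ℝ) :
    pdt f p.1 p.2 = fderiv ℝ (uncurry f) p ((0 : ℝ), (1 : ℝ)) := by
  have hF : HasFDerivAt (uncurry f) (fderiv ℝ (uncurry f) p) p :=
    ((hf.differentiable (by simp)) p).hasFDerivAt
  have hL : HasDerivAt (fun s : ℝ => (p.1, s)) ((0:ℝ), (1:ℝ)) p.2 :=
    (hasDerivAt_const p.2 p.1).prodMk (hasDerivAt_id p.2)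
  have h := hF.comp_hasDerivAt p.2 hL
  exact h.deriv

lemma contDiff_pdx {f : ℝ → ℝ → ℝ} (hf : ContDiff ℝ (⊤ : ℕ∞) (uncurry f)) :
    ContDiff ℝ (⊤ : ℕ∞) (uncurry (pdx f)) := by
  have hfd : ContDiff ℝ (⊤ : ℕ∞) (fun p : ℝ × ℝ => fderiv ℝ (uncurry f) p) :=
    hf.fderiv_right (by simp)
  have h2 : ContDiff ℝ (⊤ : ℕ∞) (fun p : ℝ × ℝ => fderiv ℝ (uncurry f) p ((1:ℝ), (0:ℝ))) :=
    hfd.clm_apply contDiff_const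
  have e : uncurry (pdx f) = fun p : ℝ × ℝ => fderiv ℝ (uncurry f) p ((1:ℝ), (0:ℝ)) :=
    funext fun p => pdx_eq hf p
  rw [e]; exact h2

lemma contDiff_pdt {f : ℝ → ℝ → ℝ} (hf : ContDiff ℝ (⊤ : ℕ∞) (uncurry f)) :
    ContDiff ℝ (⊤ : ℕ∞) (uncurry (pdt f)) := by
  have hfd : ContDiff ℝ (⊤ : ℕ∞) (fun p : ℝ × ℝ => fderiv ℝ (uncurry f) p) :=
    hf.fderiv_right (by simp)
  have h2 : ContDiff ℝ (⊤ : ℕ∞) (fun p : ℝ × ℝ => fderiv ℝ (uncurry f) p ((0:ℝ), (1:ℝ))) :=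
    hfd.clm_apply contDiff_const
  have e : uncurry (pdt f) = fun p : ℝ × ℝ => fderiv ℝ (uncurry f) p ((0:ℝ), (1:ℝ)) :=
    funext fun p => pdt_eq hf p
  rw [e]; exact h2

lemma pdx_pdt_comm {f : ℝ → ℝ → ℝ} (hf : ContDiff ℝ (⊤ : ℕ∞) (uncurry f)) (x t : ℝ) :
    pdx (pdt f) x t = pdt (pdx f) x t := by
  set F := uncurry f
  set G := fun p : ℝ × ℝ => fderiv ℝ F p with hG
  have hGc : ContDiff ℝ (⊤ : ℕ∞) G := hf.fderiv_right (by simp)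
  have hGd : DifferentiableAt ℝ G (x, t) := (hGc.differentiable (by simp)) (x, t)
  have hH : HasFDerivAt G (fderiv ℝ G (x, t)) (x, t) := hGd.hasFDerivAt
  set H := fderiv ℝ G (x, t)
  -- pdx (pdt f) x t = H (1,0) (0,1)
  have h1 : pdx (pdt f) x t = H ((1:ℝ),(0:ℝ)) ((0:ℝ),(1:ℝ)) := by
    have e : (fun y => pdt f y t) = fun y => G (y, t) ((0:ℝ),(1:ℝ)) :=
      funext fun y => pdt_eq hf (y, t)
    have hL : HasDerivAt (fun y : ℝ => (y, t)) ((1:ℝ), (0:ℝ)) x :=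
      (hasDerivAt_id x).prodMk (hasDerivAt_const x t)
    have hc : HasDerivAt (fun y : ℝ => G (y, t)) (H ((1:ℝ),(0:ℝ))) x :=
      hH.comp_hasDerivAt x hL
    have hd : HasDerivAt (fun y : ℝ => G (y, t) ((0:ℝ),(1:ℝ)))
        (H ((1:ℝ),(0:ℝ)) ((0:ℝ),(1:ℝ))) x := by
      have := hc.clm_apply (hasDerivAt_const x ((0:ℝ),(1:ℝ)))
      simpa using this
    show deriv (fun y => pdt f y t) x = _
    rw [e, hd.deriv]
  have h2 : pdt (pdx f) x t = H ((0:ℝ),(1:ℝ)) ((1:ℝ),(0:ℝ)) := by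
    have e : (fun s => pdx f x s) = fun s => G (x, s) ((1:ℝ),(0:ℝ)) :=
      funext fun s => pdx_eq hf (x, s)
    have hL : HasDerivAt (fun s : ℝ => (x, s)) ((0:ℝ), (1:ℝ)) t :=
      (hasDerivAt_const t x).prodMk (hasDerivAt_id t)
    have hc : HasDerivAt (fun s : ℝ => G (x, s)) (H ((0:ℝ),(1:ℝ))) t :=
      hH.comp_hasDerivAt t hL
    have hd : HasDerivAt (fun s : ℝ => G (x, s) ((1:ℝ),(0:ℝ)))
        (H ((0:ℝ),(1:ℝ)) ((1:ℝ),(0:ℝ))) t := by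
      have := hc.clm_apply (hasDerivAt_const t ((1:ℝ),(0:ℝ)))
      simpa using this
    show deriv (fun s => pdx f x s) t = _
    rw [e, hd.deriv]
  rw [h1, h2]
  exact second_derivative_symmetric (fun y => ((hf.differentiable (by simp)) y).hasFDerivAt) hH _ _
set_option maxHeartbeats 2000000 in
/-- For a solution `u` of `u_tt − (u·u_x)_x + ε·u·u_t = 0` and the substitution
`w = c1·t·x + c2·x + c3·t + c4 + ε(c5·x·t + c6·t − (1/6)c1·x³ − (1/2)c3·x² + c7·x + c8)`,
the vector `(T^t, T^x)` built from the scaling symmetry satisfies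
`D_t(T^t) + D_x(T^x) = −(1/2)ε²·u·(c5·x + c6)·(2u + x·u_x + 2t·u_t)`,
hence is a first-order approximate conserved vector. -/
theorem stmt10 (ε c1 c2 c3 c4 c5 c6 c7 c8 : ℝ) (u : ℝ → ℝ → ℝ)
    (hu : ContDiff ℝ (⊤ : ℕ∞) (Function.uncurry u))
    (hpde : ∀ x t : ℝ,
      pdt (pdt u) x t
        = (pdx u x t) ^ 2 + u x t * pdx (pdx u) x t - ε * u x t * pdt u x t)
    (w : ℝ → ℝ → ℝ)
    (hw : ∀ x t : ℝ,
      w x t = c1 * t * x + c2 * x + c3 * t + c4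
        + ε * (c5 * x * t + c6 * t - (1/6) * c1 * x ^ 3 - (1/2) * c3 * x ^ 2
            + c7 * x + c8))
    (Tt Tx : ℝ → ℝ → ℝ)
    (hTt : ∀ x t : ℝ,
      Tt x t = pdt w x t * (u x t + (1/2) * x * pdx u x t + t * pdt u x t)
        + (1/2) * x * pdx w x t * pdt u x t + t * pdx w x t * u x t * pdx u x t
        - (3/2) * w x t * pdt u x t
        - ε * w x t * u x t * (u x t + (1/2) * x * pdx u x t))
    (hTx : ∀ x t : ℝ,
      Tx x t = -(u x t * pdx w x t * (u x t + (1/2) * x * pdx u x t + t * pdt u x t))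
        - (1/2) * x * pdt w x t * pdt u x t - t * pdt w x t * u x t * pdx u x t
        + (3/2) * w x t * u x t * pdx u x t
        + (1/2) * ε * x * w x t * u x t * pdt u x t) :
    ∀ x t : ℝ,
      pdt Tt x t + pdx Tx x t
        = -(1/2) * ε ^ 2 * u x t * (c5 * x + c6)
            * (2 * u x t + x * pdx u x t + 2 * t * pdt u x t) := by
  have hwt : ∀ X T : ℝ, pdt w X T = c1*X + c3 + ε*(c5*X + c6) := by
    intro X T
    have e : (fun s => w X s) = fun s : ℝ =>
        0*s^3 + 0*s^2 + (c1*X + c3 + ε*(c5*X + c6))*s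
          + (c2*X + c4 + ε*(-(1/6)*c1*X^3 - (1/2)*c3*X^2 + c7*X + c8)) :=
      funext fun s => by rw [hw]; ring
    show deriv (fun s => w X s) T = _
    rw [e, (cubic_hasDerivAt _ _ _ _ T).deriv]; ring
  have hwx : ∀ X T : ℝ, pdx w X T = c1*T + c2 + ε*(c5*T - (1/2)*c1*X^2 - c3*X + c7) := by
    intro X T
    have e : (fun y => w y T) = fun y : ℝ =>
        (-(1/6)*ε*c1)*y^3 + (-(1/2)*ε*c3)*y^2 + (c1*T + c2 + ε*(c5*T + c7))*y
          + (c3*T + c4 + ε*(c6*T + c8)) :=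
      funext fun y => by rw [hw]; ring
    show deriv (fun y => w y T) X = _
    rw [e, (cubic_hasDerivAt _ _ _ _ X).deriv]; ring
  intro x t
  have hA := hasDerivAt_slice_t hu x t
  have hB := hasDerivAt_slice_t (contDiff_pdx hu) x t
  have hC := hasDerivAt_slice_t (contDiff_pdt hu) x t
  have hA' := hasDerivAt_slice_x hu x t
  have hB' := hasDerivAt_slice_x (contDiff_pdx hu) x t
  have hC' := hasDerivAt_slice_x (contDiff_pdt hu) x t
  have hid := hasDerivAt_id t
  have hid' := hasDerivAt_id x
  have hP := cubic_hasDerivAt 0 0 0 (c1*x + c3 + ε*(c5*x + c6)) t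
  have hQ := cubic_hasDerivAt 0 0 (c1 + ε*c5) (c2 + ε*(-(1/2)*c1*x^2 - c3*x + c7)) t
  have hR := cubic_hasDerivAt 0 0 (c1*x + c3 + ε*(c5*x + c6))
      (c2*x + c4 + ε*(-(1/6)*c1*x^3 - (1/2)*c3*x^2 + c7*x + c8)) t
  have hWx' := cubic_hasDerivAt 0 (-(1/2)*ε*c1) (-(ε*c3)) (c1*t + c2 + ε*(c5*t + c7)) x
  have hWt' := cubic_hasDerivAt 0 0 (c1 + ε*c5) (c3 + ε*c6) x
  have hW' := cubic_hasDerivAt (-(1/6)*ε*c1) (-(1/2)*ε*c3) (c1*t + c2 + ε*(c5*t + c7))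
      (c3*t + c4 + ε*(c6*t + c8)) x
  have e1 : (fun s => Tt x s) = fun s : ℝ =>
      (0*s^3 + 0*s^2 + 0*s + (c1*x + c3 + ε*(c5*x + c6)))
          * (u x s + (1/2)*x*pdx u x s + s*pdt u x s)
        + (1/2)*x*(0*s^3 + 0*s^2 + (c1 + ε*c5)*s + (c2 + ε*(-(1/2)*c1*x^2 - c3*x + c7)))
          *pdt u x s
        + s*(0*s^3 + 0*s^2 + (c1 + ε*c5)*s + (c2 + ε*(-(1/2)*c1*x^2 - c3*x + c7)))
          *u x s*pdx u x s
        - (3/2)*(0*s^3 + 0*s^2 + (c1*x + c3 + ε*(c5*x + c6))*s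
            + (c2*x + c4 + ε*(-(1/6)*c1*x^3 - (1/2)*c3*x^2 + c7*x + c8)))*pdt u x s
        - ε*(0*s^3 + 0*s^2 + (c1*x + c3 + ε*(c5*x + c6))*s
            + (c2*x + c4 + ε*(-(1/6)*c1*x^3 - (1/2)*c3*x^2 + c7*x + c8)))
          *u x s*(u x s + (1/2)*x*pdx u x s) :=
    funext fun s => by rw [hTt x s, hwt x s, hwx x s, hw x s]; ring
  have e2 : (fun y => Tx y t) = fun y : ℝ =>
      -(u y t * (0*y^3 + (-(1/2)*ε*c1)*y^2 + (-(ε*c3))*y + (c1*t + c2 + ε*(c5*t + c7)))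
          * (u y t + (1/2)*y*pdx u y t + t*pdt u y t))
        - (1/2)*y*(0*y^3 + 0*y^2 + (c1 + ε*c5)*y + (c3 + ε*c6))*pdt u y t
        - t*(0*y^3 + 0*y^2 + (c1 + ε*c5)*y + (c3 + ε*c6))*u y t*pdx u y t
        + (3/2)*((-(1/6)*ε*c1)*y^3 + (-(1/2)*ε*c3)*y^2 + (c1*t + c2 + ε*(c5*t + c7))*y
            + (c3*t + c4 + ε*(c6*t + c8)))*u y t*pdx u y t
        + (1/2)*ε*y*((-(1/6)*ε*c1)*y^3 + (-(1/2)*ε*c3)*y^2 + (c1*t + c2 + ε*(c5*t + c7))*y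
            + (c3*t + c4 + ε*(c6*t + c8)))*u y t*pdt u y t :=
    funext fun y => by rw [hTx y t, hwt y t, hwx y t, hw y t]; ring
  have H1 : HasDerivAt (fun s : ℝ =>
      (0*s^3 + 0*s^2 + 0*s + (c1*x + c3 + ε*(c5*x + c6)))
          * (u x s + (1/2)*x*pdx u x s + s*pdt u x s)
        + (1/2)*x*(0*s^3 + 0*s^2 + (c1 + ε*c5)*s + (c2 + ε*(-(1/2)*c1*x^2 - c3*x + c7)))
          *pdt u x s
        + s*(0*s^3 + 0*s^2 + (c1 + ε*c5)*s + (c2 + ε*(-(1/2)*c1*x^2 - c3*x + c7)))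
          *u x s*pdx u x s
        - (3/2)*(0*s^3 + 0*s^2 + (c1*x + c3 + ε*(c5*x + c6))*s
            + (c2*x + c4 + ε*(-(1/6)*c1*x^3 - (1/2)*c3*x^2 + c7*x + c8)))*pdt u x s
        - ε*(0*s^3 + 0*s^2 + (c1*x + c3 + ε*(c5*x + c6))*s
            + (c2*x + c4 + ε*(-(1/6)*c1*x^3 - (1/2)*c3*x^2 + c7*x + c8)))
          *u x s*(u x s + (1/2)*x*pdx u x s)) _ t :=
    (((  (hP.mul ((hA.add (hB.const_mul ((1/2)*x))).add (hid.mul hC))).add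
         ((hQ.const_mul ((1/2)*x)).mul hC)).add
         (((hid.mul hQ).mul hA).mul hB)).sub
         ((hR.const_mul (3/2)).mul hC)).sub
         (((hR.const_mul ε).mul hA).mul (hA.add (hB.const_mul ((1/2)*x))))
  have H2 : HasDerivAt (fun y : ℝ =>
      -(u y t * (0*y^3 + (-(1/2)*ε*c1)*y^2 + (-(ε*c3))*y + (c1*t + c2 + ε*(c5*t + c7)))
          * (u y t + (1/2)*y*pdx u y t + t*pdt u y t))
        - (1/2)*y*(0*y^3 + 0*y^2 + (c1 + ε*c5)*y + (c3 + ε*c6))*pdt u y t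
        - t*(0*y^3 + 0*y^2 + (c1 + ε*c5)*y + (c3 + ε*c6))*u y t*pdx u y t
        + (3/2)*((-(1/6)*ε*c1)*y^3 + (-(1/2)*ε*c3)*y^2 + (c1*t + c2 + ε*(c5*t + c7))*y
            + (c3*t + c4 + ε*(c6*t + c8)))*u y t*pdx u y t
        + (1/2)*ε*y*((-(1/6)*ε*c1)*y^3 + (-(1/2)*ε*c3)*y^2 + (c1*t + c2 + ε*(c5*t + c7))*y
            + (c3*t + c4 + ε*(c6*t + c8)))*u y t*pdt u y t) _ x :=
    (((( ((hA'.mul hWx').mul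
            ((hA'.add ((hid'.const_mul (1/2)).mul hB')).add (hC'.const_mul t))).neg).sub
         ((((hid'.const_mul (1/2)).mul hWt').mul hC'))).sub
         (((hWt'.const_mul t).mul hA').mul hB')).add
         (((hW'.const_mul (3/2)).mul hA').mul hB')).add
         ((((hid'.const_mul ((1/2)*ε)).mul hW').mul hA').mul hC')
  show deriv (fun s => Tt x s) t + deriv (fun y => Tx y t) x = _
  rw [e1, e2, H1.deriv, H2.deriv, hpde x t, pdx_pdt_comm hu x t]
  simp only [id_eq, Pi.mul_apply, Pi.add_apply, Pi.sub_apply, Pi.neg_apply, id]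
  ring
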